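/- Let G = (V,E) be a graph and let G' be obtained from G by adding a clique C on k−1 new vertices all adjacent to every vertex of V, a new vertex v adjacent to all of C, and a new pendant vertex u adjacent only to v. Then G has a vertex-edge dominating set of size at most t if and only if G' has a k-vertex-edge dominating set of size at most t + k. -/

import Mathlib

def closedNbr {V : Type*} (G : SimpleGraph V) (v : V) : Set V :=
  insert v (G.neighborSet v)

def kVEDom {V : Type*} (G : SimpleGraph V) (k : ℕ) (D : Set V) : Prop :=
  ∀ u v : V, G.Adj u v → k ≤ ((closedNbr G u ∪ closedNbr G v) ∩ D).ncard

/-- The graph `G′` obtained from `G` by adding a clique `C` on `k-1` new vertices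
(`Sum.inr (Sum.inl _)`) joined to all of `V`, a new vertex `v = Sum.inr (Sum.inr 0)`
joined to all of `C`, and a pendant vertex `u = Sum.inr (Sum.inr 1)` joined to `v`. -/
def extGraph {V : Type*} (G : SimpleGraph V) (k : ℕ) :
    SimpleGraph (V ⊕ (Fin (k - 1) ⊕ Fin 2)) :=
  SimpleGraph.fromRel (fun a b =>
    match a, b with
    | .inl x, .inl y => G.Adj x y
    | .inl _, .inr (.inl _) => True
    | .inr (.inl _), .inr (.inl _) => True
    | .inr (.inl _), .inr (.inr j) => j = 0
    | .inr (.inr i), .inr (.inr j) => i = 0 ∧ j = 1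
    | _, _ => False)

/-! `C ∪ {v}` has `k` vertices and lies in the closed neighbourhood of each of its vertices,
while `C` lies in that of every vertex of `V`. Hence adding `C ∪ {v}` to a vertex-edge
dominating set `D` of `G` gives a `k`-vertex-edge dominating set of `G′`: an edge of `G` sees
the `k - 1` vertices of `C` and a vertex of `D`, and every other edge has an endpoint in
`C ∪ {v}`. Conversely, if `D'` is `k`-vertex-edge dominating in `G′`, the edge `vu` forces
`k` vertices of `D'` outside `V`, and an edge of `G` sees at most the `k - 1` vertices of `C`
outside `V`, so `D' ∩ V` vertex-edge dominates `G`. -/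

lemma Set.ncard_preimage_inl_add_ncard_preimage_inr {α β : Type*} {s : Set (α ⊕ β)}
    (hs : s.Finite) : (Sum.inl ⁻¹' s).ncard + (Sum.inr ⁻¹' s).ncard = s.ncard := by
  rw [← Set.ncard_image_of_injective (Sum.inl ⁻¹' s) Sum.inl_injective,
    ← Set.ncard_image_of_injective (Sum.inr ⁻¹' s) Sum.inr_injective,
    ← Set.ncard_union_eq Set.disjoint_image_inl_image_inr
      (hs.subset (Set.image_preimage_subset _ _)) (hs.subset (Set.image_preimage_subset _ _)),
    Set.image_preimage_inl_union_image_preimage_inr]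

namespace extGraph

variable {V : Type*} {G : SimpleGraph V} {k : ℕ}

@[simp] lemma adj_inl_inl {x y : V} : (extGraph G k).Adj (.inl x) (.inl y) ↔ G.Adj x y := by
  simp only [extGraph, SimpleGraph.fromRel_adj, ne_eq, Sum.inl.injEq]
  exact ⟨fun h => h.2.elim id SimpleGraph.Adj.symm, fun h => ⟨h.ne, .inl h⟩⟩

@[simp] lemma adj_inl_clique (x : V) (c : Fin (k - 1)) :
    (extGraph G k).Adj (.inl x) (.inr (.inl c)) := by
  simp [extGraph]

@[simp] lemma adj_clique_clique {c c' : Fin (k - 1)} :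
    (extGraph G k).Adj (.inr (.inl c)) (.inr (.inl c')) ↔ c ≠ c' := by
  simp [extGraph]

@[simp] lemma adj_clique_inr_inr {c : Fin (k - 1)} {j : Fin 2} :
    (extGraph G k).Adj (.inr (.inl c)) (.inr (.inr j)) ↔ j = 0 := by
  simp [extGraph]

@[simp] lemma not_adj_inl_inr_inr (x : V) (j : Fin 2) :
    ¬ (extGraph G k).Adj (.inl x) (.inr (.inr j)) := by
  simp [extGraph]

@[simp] lemma adj_inr_inr {i j : Fin 2} :
    (extGraph G k).Adj (.inr (.inr i)) (.inr (.inr j)) ↔ i ≠ j := by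
  fin_cases i <;> fin_cases j <;> simp [extGraph]

variable (V k) in
def clique : Set (V ⊕ (Fin (k - 1) ⊕ Fin 2)) := Set.range (Sum.inr ∘ Sum.inl)

variable (V k) in
/-- The set `C ∪ {v}`. -/
def core : Set (V ⊕ (Fin (k - 1) ⊕ Fin 2)) := insert (.inr (.inr 0)) (clique V k)

lemma finite_clique : (clique V k).Finite := Set.finite_range _

lemma ncard_clique : (clique V k).ncard = k - 1 := by
  rw [clique, Set.ncard_range_of_injective (Sum.inr_injective.comp Sum.inl_injective),
    Nat.card_eq_fintype_card, Fintype.card_fin]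

lemma ncard_core (hk : 0 < k) : (core V k).ncard = k := by
  rw [core, Set.ncard_insert_of_notMem (by simp [clique]) finite_clique, ncard_clique]
  omega

lemma closedNbr_inl (x : V) :
    closedNbr (extGraph G k) (.inl x) = Sum.inl '' closedNbr G x ∪ clique V k := by
  ext (y | c | j) <;> simp [closedNbr, clique, eq_comm]

lemma closedNbr_inr_inr_subset (j : Fin 2) :
    closedNbr (extGraph G k) (.inr (.inr j)) ⊆ Set.range Sum.inr := by
  rintro (y | w) (h | h)
  · cases h
  · exact absurd h.symm (not_adj_inl_inr_inr (G := G) _ _)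
  all_goals exact ⟨w, rfl⟩

lemma core_subset_closedNbr_clique (c : Fin (k - 1)) :
    core V k ⊆ closedNbr (extGraph G k) (.inr (.inl c)) := by
  rintro _ (rfl | ⟨c', rfl⟩)
  · simp [closedNbr]
  · simp [closedNbr, eq_comm, or_iff_not_imp_left]

lemma core_subset_closedNbr_inr_inr_zero :
    core V k ⊆ closedNbr (extGraph G k) (.inr (.inr 0)) := by
  rintro _ (rfl | ⟨c, rfl⟩)
  · exact Set.mem_insert _ _
  · exact Or.inr (adj_clique_inr_inr (G := G).2 rfl).symm

lemma adj_cases {a b : V ⊕ (Fin (k - 1) ⊕ Fin 2)} (h : (extGraph G k).Adj a b) :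
    (∃ x y, a = .inl x ∧ b = .inl y ∧ G.Adj x y) ∨
      core V k ⊆ closedNbr (extGraph G k) a ∪ closedNbr (extGraph G k) b := by
  rcases a with x | c | i <;> rcases b with y | c' | j
  · exact .inl ⟨x, y, rfl, rfl, adj_inl_inl.1 h⟩
  · exact .inr (core_subset_closedNbr_clique c' |>.trans Set.subset_union_right)
  · exact absurd h (not_adj_inl_inr_inr _ _)
  · exact .inr (core_subset_closedNbr_clique c |>.trans Set.subset_union_left)
  · exact .inr (core_subset_closedNbr_clique c |>.trans Set.subset_union_left)
  · exact .inr (core_subset_closedNbr_clique c |>.trans Set.subset_union_left)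
  · exact absurd h.symm (not_adj_inl_inr_inr _ _)
  · exact .inr (core_subset_closedNbr_clique c' |>.trans Set.subset_union_right)
  · obtain rfl | rfl : i = 0 ∨ j = 0 := by revert h; fin_cases i <;> fin_cases j <;> simp
    · exact .inr (core_subset_closedNbr_inr_inr_zero.trans Set.subset_union_left)
    · exact .inr (core_subset_closedNbr_inr_inr_zero.trans Set.subset_union_right)

lemma kVEDom_union_core [Finite V] (hk : 0 < k) {D : Set V} (hD : kVEDom G 1 D) :
    kVEDom (extGraph G k) k (Sum.inl '' D ∪ core V k) := by
  intro a b hab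
  rcases adj_cases hab with ⟨x, y, rfl, rfl, hxy⟩ | hcore
  · obtain ⟨d, hdN, hdD⟩ : ((closedNbr G x ∪ closedNbr G y) ∩ D).Nonempty :=
      Set.nonempty_of_ncard_ne_zero (Nat.one_le_iff_ne_zero.1 (hD x y hxy))
    have hsub : insert (Sum.inl d) (clique V k) ⊆
        (closedNbr (extGraph G k) (.inl x) ∪ closedNbr (extGraph G k) (.inl y)) ∩
          (Sum.inl '' D ∪ core V k) := by
      rw [closedNbr_inl, closedNbr_inl, Set.insert_subset_iff]
      refine ⟨⟨?_, .inl ⟨d, hdD, rfl⟩⟩, fun c hc => ⟨.inl (.inr hc), .inr (.inr hc)⟩⟩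
      rcases hdN with hd | hd
      exacts [.inl (.inl ⟨d, hd, rfl⟩), .inr (.inl ⟨d, hd, rfl⟩)]
    calc k = (insert (Sum.inl d) (clique V k)).ncard := by
          rw [Set.ncard_insert_of_notMem (by simp [clique]) finite_clique, ncard_clique]
          omega
      _ ≤ _ := Set.ncard_le_ncard hsub (Set.toFinite _)
  · calc k = (core V k).ncard := (ncard_core hk).symm
      _ ≤ _ := Set.ncard_le_ncard (Set.subset_inter hcore Set.subset_union_right)
        (Set.toFinite _)

lemma kVEDom_preimage_inl [Finite V] (hk : 0 < k) {D' : Set (V ⊕ (Fin (k - 1) ⊕ Fin 2))}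
    (hD' : kVEDom (extGraph G k) k D') : kVEDom G 1 (Sum.inl ⁻¹' D') := by
  intro x y hxy
  have hsub : (closedNbr (extGraph G k) (.inl x) ∪ closedNbr (extGraph G k) (.inl y)) ∩ D' ⊆
      Sum.inl '' ((closedNbr G x ∪ closedNbr G y) ∩ Sum.inl ⁻¹' D') ∪ clique V k := by
    rw [closedNbr_inl, closedNbr_inl, Set.image_inter_preimage, Set.image_union]
    intro z
    simp only [Set.mem_union, Set.mem_inter_iff]
    tauto
  have hcount := calc k ≤ _ := hD' _ _ (adj_inl_inl.2 hxy)
    _ ≤ _ := Set.ncard_le_ncard hsub (Set.toFinite _)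
    _ ≤ _ := Set.ncard_union_le _ _
    _ = ((closedNbr G x ∪ closedNbr G y) ∩ Sum.inl ⁻¹' D').ncard + (k - 1) := by
      rw [Set.ncard_image_of_injective _ Sum.inl_injective, ncard_clique]
  omega

lemma ncard_preimage_inl_add_le [Finite V] {D' : Set (V ⊕ (Fin (k - 1) ⊕ Fin 2))}
    (hD' : kVEDom (extGraph G k) k D') : (Sum.inl ⁻¹' D').ncard + k ≤ D'.ncard := by
  have hvu : (extGraph G k).Adj (.inr (.inr 0)) (.inr (.inr 1)) := adj_inr_inr.2 (by decide)
  have hinr : k ≤ (Sum.inr ⁻¹' D').ncard := calc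
    k ≤ _ := hD' _ _ hvu
    _ ≤ (Sum.inr '' (Sum.inr ⁻¹' D')).ncard := by
      refine Set.ncard_le_ncard ?_ (Set.toFinite _)
      rw [Set.image_preimage_eq_range_inter]
      exact Set.inter_subset_inter_left _
        (Set.union_subset (closedNbr_inr_inr_subset 0) (closedNbr_inr_inr_subset 1))
    _ = _ := Set.ncard_image_of_injective _ Sum.inr_injective
  have := Set.ncard_preimage_inl_add_ncard_preimage_inr (Set.toFinite D')
  omega

end extGraph

/-- `G` has a vertex-edge dominating set of size at most `t` iff `G′` has a
k-vertex-edge dominating set of size at most `t + k`. -/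
theorem ve_dom_iff_kve_dom_ext {V : Type*} [Fintype V] (G : SimpleGraph V)
    (k t : ℕ) (hk : 2 ≤ k) :
    (∃ D : Set V, kVEDom G 1 D ∧ D.ncard ≤ t) ↔
      (∃ D' : Set (V ⊕ (Fin (k - 1) ⊕ Fin 2)),
        kVEDom (extGraph G k) k D' ∧ D'.ncard ≤ t + k) := by
  have hk₀ : 0 < k := by omega
  constructor
  · rintro ⟨D, hD, hDt⟩
    refine ⟨_, extGraph.kVEDom_union_core hk₀ hD, ?_⟩
    calc _ ≤ (Sum.inl '' D).ncard + (extGraph.core V k).ncard := Set.ncard_union_le _ _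
      _ ≤ t + k := by
        rw [Set.ncard_image_of_injective _ Sum.inl_injective, extGraph.ncard_core hk₀]
        omega
  · rintro ⟨D', hD', hD't⟩
    have := extGraph.ncard_preimage_inl_add_le hD'
    exact ⟨_, extGraph.kVEDom_preimage_inl hk₀ hD', by omega⟩
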